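/- Let Ω be a nonempty finite set and let p : ℝ^m → Ω → ℝ be a family of probability mass functions. Fix λ₀ ∈ ℝ^m and a function L : ℝ^m × Ω → ℝ^m satisfying: (1) for every δλ in some neighborhood of 0 and every x ∈ Ω, (1 + exp(−δλ·L(δλ,x)))⁻¹ · (p(λ₀ + δλ/2, x) + p(λ₀ − δλ/2, x)) = p(λ₀ + δλ/2, x); (2) for each x the map δλ ↦ L(δλ,x) is continuous at 0; (3) for each x the map λ ↦ p(λ,x) is differentiable at λ₀; (4) for each x with p(λ₀,x) = 0 one has p(λ₀ + δλ, x) = o(‖δλ‖²) as δλ → 0. Then for every fixed vector v ∈ ℝ^m, lim_{ε→0, ε≠0} (8/ε²) · (1 − Σ_{x∈Ω} √(p(λ₀,x) · p(λ₀ + εv, x))) = Σ_{μ,ν} v_μ v_ν · Σ_{x∈Ω} p(λ₀,x) · L(0,x)_μ · L(0,x)_ν. -/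

import Mathlib

/-!
Along the line `ε ↦ λ₀ + ε • v`, hypothesis (1) says `q(-ε) = q(ε) · exp(-2ε c(ε))` with
`q(ε) = p(λ₀ + ε v, x)` and `c(ε) → c(0) = v · L(0, x)`. Differentiating this identity at `ε = 0`
gives `-q'(0) = q'(0) - 2 q(0) c(0)`, i.e. `q'(0) = p(λ₀, x) (v · L(0, x))`. Since both `p(λ₀, ·)`
and `p(λ₀ + ε v, ·)` sum to one, `(8/ε²)(1 - Σ √(p q)) = Σ 4 ((√q - √p)/ε)²`, and each term tends
to `q'(0)² / p(λ₀, x) = p(λ₀, x) (v · L(0, x))²` when `p(λ₀, x) > 0`, and to `0` by (4) otherwise.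
-/

open Filter Topology

lemma eq_mul_exp_neg_of_inv_one_add_exp_neg_mul {a b t : ℝ}
    (h : (1 + Real.exp (-t))⁻¹ * (a + b) = a) : b = a * Real.exp (-t) := by
  have hpos : 0 < 1 + Real.exp (-t) := by positivity
  rw [inv_mul_eq_iff_eq_mul₀ hpos.ne'] at h
  linarith

lemma hasDerivAt_id_mul_of_continuousAt {c : ℝ → ℝ} (hc : ContinuousAt c 0) :
    HasDerivAt (fun ε => ε * c ε) (c 0) 0 := by
  rw [hasDerivAt_iff_tendsto_slope_zero]
  refine (hc.tendsto.mono_left nhdsWithin_le_nhds).congr' ?_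
  filter_upwards [self_mem_nhdsWithin] with ε (hε : ε ≠ 0)
  simp [hε]

lemma HasDerivAt.eq_mul_of_eventually_comp_neg_eq_mul_exp {f c : ℝ → ℝ} {f' : ℝ}
    (hf : HasDerivAt f f' 0) (hc : ContinuousAt c 0)
    (h : ∀ᶠ ε in 𝓝 0, f (-ε) = f ε * Real.exp (-(2 * ε * c ε))) : f' = f 0 * c 0 := by
  have hleft : HasDerivAt (fun ε => f (-ε)) (-f') 0 := by
    have := (neg_zero (G := ℝ) ▸ hf).scomp 0 (hasDerivAt_neg 0)
    simpa [Function.comp_def] using this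
  have hexp : HasDerivAt (fun ε => Real.exp (-(2 * ε * c ε))) (-(2 * c 0)) 0 := by
    have := ((hasDerivAt_id_mul_of_continuousAt hc).const_mul 2).neg.exp
    simpa [mul_assoc] using this
  have hderiv := hleft.unique ((hf.mul hexp).congr_of_eventuallyEq h)
  simp only [mul_zero, zero_mul, neg_zero, Real.exp_zero, mul_one, mul_neg] at hderiv
  linarith

lemma hasLineDerivAt_of_eventually_reflection {ι : Type*} [Fintype ι] {f : (ι → ℝ) → ℝ}
    {ℓ : (ι → ℝ) → ι → ℝ} {lam0 v : ι → ℝ} (hf : LineDifferentiableAt ℝ f lam0 v)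
    (hℓ : ContinuousAt ℓ 0)
    (h : ∀ᶠ dl in 𝓝 0, f (lam0 - dl / 2) = f (lam0 + dl / 2) * Real.exp (-(∑ i, dl i * ℓ dl i))) :
    HasLineDerivAt ℝ f (f lam0 * ∑ i, v i * ℓ 0 i) lam0 v := by
  have hline : Tendsto (fun ε : ℝ => (2 * ε) • v) (𝓝 0) (𝓝 0) := by
    simpa using ((tendsto_id (x := 𝓝 (0 : ℝ))).const_mul 2).smul_const v
  set c : ℝ → ℝ := fun ε => ∑ i, v i * ℓ ((2 * ε) • v) i
  have hc : ContinuousAt c 0 := by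
    have : ContinuousAt (fun ε : ℝ => ℓ ((2 * ε) • v)) 0 := hℓ.comp_of_eq (by fun_prop) (by simp)
    exact (by fun_prop : Continuous fun w : ι → ℝ => ∑ i, v i * w i).continuousAt.comp this
  have hrefl : ∀ᶠ ε in 𝓝 0, f (lam0 + (-ε) • v)
      = f (lam0 + ε • v) * Real.exp (-(2 * ε * c ε)) := by
    filter_upwards [hline.eventually h] with ε hε
    have hhalf : (2 * ε) • v / 2 = ε • v := by
      ext i; simp only [Pi.div_apply, Pi.smul_apply, smul_eq_mul, Pi.ofNat_apply]; ring
    have hexp : ∑ i, ((2 * ε) • v) i * ℓ ((2 * ε) • v) i = 2 * ε * c ε := by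
      simp only [c, Finset.mul_sum, Pi.smul_apply, smul_eq_mul, mul_assoc]
    rwa [hhalf, hexp, sub_eq_add_neg, ← neg_smul] at hε
  have hderiv := hf.hasLineDerivAt.eq_mul_of_eventually_comp_neg_eq_mul_exp hc hrefl
  simp only [zero_smul, add_zero, mul_zero, c] at hderiv
  exact hderiv ▸ hf.hasLineDerivAt

lemma isLittleO_sq_comp_smul {E : Type*} [NormedAddCommGroup E] [NormedSpace ℝ E] {f : E → ℝ}
    (hf : f =o[𝓝 0] fun x => ‖x‖ ^ 2) (v : E) :
    (fun ε : ℝ => f (ε • v)) =o[𝓝 0] fun ε => ε ^ 2 := by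
  have hline : Tendsto (fun ε : ℝ => ε • v) (𝓝 0) (𝓝 0) := by
    simpa using (tendsto_id (x := 𝓝 (0 : ℝ))).smul_const v
  refine (hf.comp_tendsto hline).trans_isBigO ?_
  have hnorm : (fun ε : ℝ => ‖ε • v‖ ^ 2) = fun ε => ‖v‖ ^ 2 * ε ^ 2 := by
    ext ε; rw [norm_smul, mul_pow, Real.norm_eq_abs, sq_abs, mul_comm]
  simpa [Function.comp_def, hnorm] using
    (Asymptotics.isBigO_refl (fun ε : ℝ => ε ^ 2) _).const_mul_left (‖v‖ ^ 2)

lemma tendsto_four_mul_sq_slope_sqrt {f : ℝ → ℝ} {s : ℝ} (hf_nonneg : ∀ ε, 0 ≤ f ε)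
    (hf : HasDerivAt f (f 0 * s) 0) (hzero : f 0 = 0 → f =o[𝓝 0] fun ε => ε ^ 2) :
    Tendsto (fun ε => 4 * ((√(f ε) - √(f 0)) / ε) ^ 2) (𝓝[≠] 0) (𝓝 (f 0 * s ^ 2)) := by
  rcases (hf_nonneg 0).eq_or_lt with h0 | h0
  · have hlim := tendsto_nhdsWithin_of_tendsto_nhds (s := {0}ᶜ)
      ((hzero h0.symm).tendsto_div_nhds_zero.const_mul 4)
    rw [mul_zero] at hlim
    rw [← h0, zero_mul, Real.sqrt_zero]
    refine hlim.congr fun ε => ?_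
    rw [sub_zero, div_pow, Real.sq_sqrt (hf_nonneg ε)]
  · have hslope := ((Real.hasDerivAt_sqrt h0.ne').comp 0 hf).tendsto_slope_zero
    have hlim : 4 * (1 / (2 * √(f 0)) * (f 0 * s)) ^ 2 = f 0 * s ^ 2 := by
      have hsqrt : √(f 0) ^ 2 = f 0 := Real.sq_sqrt h0.le
      have : √(f 0) ≠ 0 := (Real.sqrt_pos.mpr h0).ne'
      field_simp
      rw [hsqrt]
      ring
    rw [← hlim]
    refine ((hslope.pow 2).const_mul 4).congr fun ε => ?_
    simp only [zero_add, smul_eq_mul, Function.comp_apply, div_eq_inv_mul]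

lemma sum_sq_sqrt_sub_sqrt {ι : Type*} [Fintype ι] {a b : ι → ℝ} (ha : ∀ i, 0 ≤ a i)
    (hb : ∀ i, 0 ≤ b i) :
    ∑ i, (√(b i) - √(a i)) ^ 2 = ∑ i, a i + ∑ i, b i - 2 * ∑ i, √(a i * b i) := by
  have hterm : ∀ i, (√(b i) - √(a i)) ^ 2 = a i + b i - 2 * √(a i * b i) := fun i => by
    rw [sub_sq, Real.sq_sqrt (hb i), Real.sq_sqrt (ha i), Real.sqrt_mul (ha i)]
    ring
  simp only [hterm, Finset.sum_sub_distrib, Finset.sum_add_distrib, Finset.mul_sum]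

lemma sum_mul_sq_sum_mul {ι κ : Type*} [Fintype ι] [Fintype κ] (w : ι → ℝ) (u : ι → κ → ℝ)
    (v : κ → ℝ) :
    ∑ x, w x * (∑ i, v i * u x i) ^ 2 = ∑ μ, ∑ ν, v μ * v ν * ∑ x, w x * u x μ * u x ν := by
  simp_rw [sq, Finset.sum_mul_sum, Finset.mul_sum]
  rw [Finset.sum_comm]
  refine Finset.sum_congr rfl fun μ _ => ?_
  rw [Finset.sum_comm]
  exact Finset.sum_congr rfl fun ν _ => Finset.sum_congr rfl fun x _ => by ring

theorem classifim_directional_limit_general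
    {Ω : Type*} [Fintype Ω] {m : ℕ}
    (p : (Fin m → ℝ) → Ω → ℝ)
    (hpos : ∀ lam x, 0 ≤ p lam x)
    (hsum : ∀ lam, ∑ x, p lam x = 1)
    (lam0 : Fin m → ℝ)
    (L : (Fin m → ℝ) → Ω → (Fin m → ℝ))
    (h1 : ∀ᶠ dl in 𝓝 (0 : Fin m → ℝ), ∀ x : Ω,
      (1 + Real.exp (-(∑ i, dl i * L dl x i)))⁻¹ *
        (p (lam0 + dl / 2) x + p (lam0 - dl / 2) x) = p (lam0 + dl / 2) x)
    (h2 : ∀ x : Ω, ContinuousAt (fun dl => L dl x) 0)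
    (h3 : ∀ x : Ω, DifferentiableAt ℝ (fun lam => p lam x) lam0)
    (h4 : ∀ x : Ω, p lam0 x = 0 →
      (fun dl : Fin m → ℝ => p (lam0 + dl) x) =o[𝓝 0] fun dl => ‖dl‖ ^ 2)
    (v : Fin m → ℝ) :
    Tendsto (fun ε : ℝ =>
        (8 / ε ^ 2) * (1 - ∑ x, Real.sqrt (p lam0 x * p (lam0 + ε • v) x)))
      (𝓝[≠] 0)
      (𝓝 (∑ μ, ∑ ν, v μ * v ν * ∑ x, p lam0 x * L 0 x μ * L 0 x ν)) := by
  have hreflect : ∀ᶠ dl in 𝓝 (0 : Fin m → ℝ), ∀ x, p (lam0 - dl / 2) x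
      = p (lam0 + dl / 2) x * Real.exp (-(∑ i, dl i * L dl x i)) := by
    filter_upwards [h1] with dl hdl x using eq_mul_exp_neg_of_inv_one_add_exp_neg_mul (hdl x)
  have hterm (x : Ω) : Tendsto (fun ε : ℝ => 4 * ((√(p (lam0 + ε • v) x) - √(p lam0 x)) / ε) ^ 2)
      (𝓝[≠] 0) (𝓝 (p lam0 x * (∑ i, v i * L 0 x i) ^ 2)) := by
    have hderiv := hasLineDerivAt_of_eventually_reflection (v := v) (h3 x).lineDifferentiableAt
      (h2 x) (hreflect.mono fun dl h => h x)
    have h := tendsto_four_mul_sq_slope_sqrt (f := fun ε : ℝ => p (lam0 + ε • v) x)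
      (s := ∑ i, v i * L 0 x i) (fun ε => hpos _ x)
    simp only [zero_smul, add_zero] at h
    exact h hderiv fun hx => isLittleO_sq_comp_smul (h4 x hx) v
  rw [← sum_mul_sq_sum_mul]
  refine (tendsto_finsetSum _ fun x _ => hterm x).congr fun ε => ?_
  simp only [div_pow, mul_div_assoc', ← Finset.sum_div, ← Finset.mul_sum]
  rw [sum_sq_sqrt_sub_sqrt (hpos lam0) (hpos _), hsum, hsum]
  ring

/-- The core directional-limit claim (eq. proof2) in the proof of the paper's Theorem 1. -/
theorem classifim_directional_limit
    {Ω : Type*} [Fintype Ω] [Nonempty Ω] {m : ℕ}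
    (p : (Fin m → ℝ) → Ω → ℝ)
    (hpos : ∀ lam x, 0 ≤ p lam x)
    (hsum : ∀ lam, ∑ x, p lam x = 1)
    (lam0 : Fin m → ℝ)
    (L : (Fin m → ℝ) → Ω → (Fin m → ℝ))
    (h1 : ∀ᶠ dl in 𝓝 (0 : Fin m → ℝ), ∀ x : Ω,
      (1 + Real.exp (-(∑ i, dl i * L dl x i)))⁻¹ *
        (p (lam0 + dl / 2) x + p (lam0 - dl / 2) x) = p (lam0 + dl / 2) x)
    (h2 : ∀ x : Ω, ContinuousAt (fun dl => L dl x) 0)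
    (h3 : ∀ x : Ω, DifferentiableAt ℝ (fun lam => p lam x) lam0)
    (h4 : ∀ x : Ω, p lam0 x = 0 →
      (fun dl : Fin m → ℝ => p (lam0 + dl) x) =o[𝓝 0] fun dl => ‖dl‖ ^ 2)
    (v : Fin m → ℝ) :
    Tendsto (fun ε : ℝ =>
        (8 / ε ^ 2) * (1 - ∑ x, Real.sqrt (p lam0 x * p (lam0 + ε • v) x)))
      (𝓝[≠] 0)
      (𝓝 (∑ μ, ∑ ν, v μ * v ν * ∑ x, p lam0 x * L 0 x μ * L 0 x ν)) :=
  classifim_directional_limit_general p hpos hsum lam0 L h1 h2 h3 h4 v
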